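/- Let H be a real inner product space, u* ∈ H, and let D ⊆ H contain 0 and be closed under scalar multiplication. Let k ≥ 2 be a natural number and let u_1, u_2, …, u_k ∈ D. Write s_j = ∑_{i=1}^j u_i for the partial sums, and suppose that for every 2 ≤ j ≤ k, the partial sum s_j is an optimal approximation of u* in the translated set s_{j−1} + D = {s_{j−1} + w : w ∈ D}. If moreover u_j ≠ 0 for every 2 ≤ j ≤ k, then the sequence of errors j ↦ ‖s_j − u*‖, for j = 1,…,k, is strictly decreasing. -/

import Mathlib

/-!
Each correction `u j` is a nonzero element of a cone `D`, so all of its real multiples are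
admissible corrections at level `j`; optimality of `s j` therefore makes `s j − u*` the point of
the line `s j − u* + ℝ • u j` closest to the origin. On that line `s (j - 1) − u*` is another point,
and it cannot be equally close: by strict convexity of the norm their midpoint would then be
strictly closer. Hence every level strictly lowers the error.
-/

open Finset

section StrictConvex

variable {E : Type*} [NormedAddCommGroup E] [NormedSpace ℝ E] [StrictConvexSpace ℝ E]

theorem norm_lt_norm_sub_of_forall_norm_le {a v : E} (hv : v ≠ 0)
    (h : ∀ t : ℝ, ‖a‖ ≤ ‖a - t • v‖) : ‖a‖ < ‖a - v‖ := by
  have hle : ‖a‖ ≤ ‖a - v‖ := by simpa using h 1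
  refine hle.lt_of_ne fun heq ↦ ?_
  have hmid : ‖(1 / 2 : ℝ) • (a + (a - v))‖ < ‖a‖ :=
    (norm_midpoint_lt_iff heq).2 fun h ↦ hv (sub_eq_self.mp h.symm)
  have hmid_eq : (1 / 2 : ℝ) • (a + (a - v)) = a - (1 / 2 : ℝ) • v := by module
  exact (h (1 / 2)).not_gt (hmid_eq ▸ hmid)

theorem norm_add_sub_lt_of_forall_norm_le {D : Set E} (hD : ∀ c : ℝ, ∀ w ∈ D, c • w ∈ D)
    {p w x : E} (hw : w ∈ D) (hw0 : w ≠ 0) (hmin : ∀ d ∈ D, ‖p + w - x‖ ≤ ‖p + d - x‖) :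
    ‖p + w - x‖ < ‖p - x‖ := by
  have hline : ∀ t : ℝ, ‖p + w - x‖ ≤ ‖p + w - x - t • w‖ := fun t ↦ by
    convert hmin _ (hD (1 - t) w hw) using 2
    module
  convert norm_lt_norm_sub_of_forall_norm_le hw0 hline using 2
  abel

end StrictConvex

theorem stmt_9_general {H : Type*} [NormedAddCommGroup H] [InnerProductSpace ℝ H]
    (ustar : H) (D : Set H)
    (hD : ∀ (c : ℝ), ∀ w ∈ D, c • w ∈ D)
    (k : ℕ) (u : ℕ → H)
    (huD : ∀ i : ℕ, 1 ≤ i → i ≤ k → u i ∈ D)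
    (hopt : ∀ j : ℕ, 2 ≤ j → j ≤ k →
      (∑ i ∈ Finset.Icc 1 j, u i) ∈
        {v : H | ∃ w ∈ D, v = (∑ i ∈ Finset.Icc 1 (j - 1), u i) + w} ∧
      ∀ v ∈ {v : H | ∃ w ∈ D, v = (∑ i ∈ Finset.Icc 1 (j - 1), u i) + w},
        ‖(∑ i ∈ Finset.Icc 1 j, u i) - ustar‖ ≤ ‖v - ustar‖)
    (hne : ∀ j : ℕ, 2 ≤ j → j ≤ k → u j ≠ 0) :
    ∀ j₁ j₂ : ℕ, 1 ≤ j₁ → j₁ < j₂ → j₂ ≤ k →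
      ‖(∑ i ∈ Finset.Icc 1 j₂, u i) - ustar‖ < ‖(∑ i ∈ Finset.Icc 1 j₁, u i) - ustar‖ := by
  have hanti : StrictAntiOn (fun j ↦ ‖(∑ i ∈ Icc 1 j, u i) - ustar‖) (Set.Icc 1 k) := by
    refine strictAntiOn_of_succ_lt Set.ordConnected_Icc fun j _ hj hj' ↦ ?_
    rw [Order.succ_eq_add_one] at hj' ⊢
    have hj2 : 2 ≤ j + 1 := Nat.succ_le_succ hj.1
    have hmin := (hopt (j + 1) hj2 hj'.2).2
    simp only [add_tsub_cancel_right, sum_Icc_succ_top (by omega : 1 ≤ j + 1)] at hmin ⊢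
    exact norm_add_sub_lt_of_forall_norm_le hD (huD _ (by omega) hj'.2) (hne _ hj2 hj'.2)
      fun d hd ↦ hmin _ ⟨d, hd, rfl⟩
  intro j₁ j₂ h₁ h₁₂ h₂
  exact hanti ⟨h₁, by omega⟩ ⟨by omega, h₂⟩ h₁₂

/-- Theorem 2(ii): under the hypotheses of Theorem 2(i), if moreover `u j ≠ 0` for all
`2 ≤ j ≤ k`, then the errors `‖s j − ustar‖` are strictly decreasing. -/
theorem stmt_9 {H : Type*} [NormedAddCommGroup H] [InnerProductSpace ℝ H]
    (ustar : H) (D : Set H) (hD0 : (0 : H) ∈ D)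
    (hD : ∀ (c : ℝ), ∀ w ∈ D, c • w ∈ D)
    (k : ℕ) (hk : 2 ≤ k) (u : ℕ → H)
    (huD : ∀ i : ℕ, 1 ≤ i → i ≤ k → u i ∈ D)
    (hopt : ∀ j : ℕ, 2 ≤ j → j ≤ k →
      (∑ i ∈ Finset.Icc 1 j, u i) ∈
        {v : H | ∃ w ∈ D, v = (∑ i ∈ Finset.Icc 1 (j - 1), u i) + w} ∧
      ∀ v ∈ {v : H | ∃ w ∈ D, v = (∑ i ∈ Finset.Icc 1 (j - 1), u i) + w},
        ‖(∑ i ∈ Finset.Icc 1 j, u i) - ustar‖ ≤ ‖v - ustar‖)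
    (hne : ∀ j : ℕ, 2 ≤ j → j ≤ k → u j ≠ 0) :
    ∀ j₁ j₂ : ℕ, 1 ≤ j₁ → j₁ < j₂ → j₂ ≤ k →
      ‖(∑ i ∈ Finset.Icc 1 j₂, u i) - ustar‖ < ‖(∑ i ∈ Finset.Icc 1 j₁, u i) - ustar‖ :=
  stmt_9_general ustar D hD k u huD hopt hne
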